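/- arXiv:1511.08413 — 6 statements merged into one kernel-verified Lean document; each statement's English description precedes it below -/
import Mathlib

section
/- Let F be a field, K a field extension of F of finite degree m, and φ : K → Matrix_m(F) an injective F-algebra homomorphism. Fix a row index i ∈ {1,…,m}. Then the map ψ : K → F^m sending a to the i-th row of φ(a) is an F-linear bijection; moreover, there exists an F-basis b of K such that ψ(a) is the coordinate vector of a with respect to b, for every a ∈ K. (Lemma 1(ii) and (iii): a fixed row of the matrix representation uniquely represents field elements, the set of representing vectors is all of F^m, and the row map is ext_B for some basis B.) -/
/-- Lemma 1(ii),(iii): for an injective `F`-algebra homomorphism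
`φ : K → Matrix_m(F)` and a fixed row index `i`, the map `a ↦ i`-th row of
`φ(a)` is an `F`-linear bijection `K → F^m`, and it is the coordinate map of
some `F`-basis of `K`. -/
theorem stmt4 (F K : Type*) [Field F] [Field K] [Algebra F K] (m : ℕ)
    [FiniteDimensional F K] (hm : Module.finrank F K = m)
    (φ : K →ₐ[F] Matrix (Fin m) (Fin m) F) (hφ : Function.Injective φ)
    (i : Fin m) :
    IsLinearMap F (fun a : K => φ a i) ∧
    Function.Bijective (fun a : K => φ a i) ∧
    ∃ b : Module.Basis (Fin m) F K, ∀ (a : K) (j : Fin m), φ a i j = b.repr a j := by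
  set L : K →ₗ[F] (Fin m → F) :=
    { toFun := fun a => φ a i
      map_add' := fun a b => by
        simp only [map_add]; funext j; simp [Matrix.add_apply]
      map_smul' := fun c a => by
        simp only [map_smul]; funext j; simp [Matrix.smul_apply] } with hL
  have hinj : Function.Injective L := by
    rw [injective_iff_map_eq_zero]
    intro a ha
    by_contra h0
    have hu : IsUnit (φ a) := (isUnit_iff_ne_zero.mpr h0).map φ
    obtain ⟨u, hu⟩ := hu
    have h1 : (φ a * (↑u⁻¹ : Matrix (Fin m) (Fin m) F)) i i
        = (1 : Matrix (Fin m) (Fin m) F) i i := by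
      rw [← hu, Units.mul_inv]
    have hrow : (fun j => φ a i j) = 0 := ha
    rw [Matrix.mul_apply, Matrix.one_apply_eq] at h1
    simp only [show ∀ j, φ a i j = 0 from fun j => congrFun hrow j, zero_mul,
      Finset.sum_const_zero] at h1
    exact one_ne_zero h1.symm
  have hbij : Function.Bijective L := by
    refine ⟨hinj, ?_⟩
    have : Module.finrank F (Fin m → F) = m := by simp
    exact ((LinearMap.injective_iff_surjective_of_finrank_eq_finrank
      (by rw [hm, this])).mp hinj)
  let e : K ≃ₗ[F] (Fin m → F) := LinearEquiv.ofBijective L hbij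
  refine ⟨⟨fun a b => L.map_add a b, fun c a => L.map_smul c a⟩, hbij, ?_⟩
  refine ⟨Module.Basis.ofEquivFun e, fun a j => ?_⟩
  rw [Module.Basis.ofEquivFun_repr_apply]
  rfl
end

section
/- Let F be a field, K a field extension of F of finite degree ℓ with F-basis b = (b_1,…,b_ℓ), and n ∈ ℕ. For v ∈ K^n and i ∈ {1,…,ℓ}, let the i-th layer of v be the vector (repr_b(v_1)_i, …, repr_b(v_n)_i) ∈ F^n, where repr_b(x)_i is the i-th coordinate of x ∈ K in the basis b. Let A_1,…,A_ℓ be F-linear subspaces of F^n, and set C := { v ∈ K^n : for every i, the i-th layer of v lies in A_i }. Then C is closed under multiplication by scalars from K (i.e., α·v ∈ C for all α ∈ K and v ∈ C) if and only if A_1 = A_2 = ⋯ = A_ℓ. (Core of Theorem 2: a generalized concatenated code whose inner dimensions k^{(1)} = ⋯ = k^{(ℓ)} are all equal is an ordinary concatenated code if and only if all outer codes coincide.) -/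
/-- Core of Theorem 2 (GCC with equal inner dimensions is an OCC iff all outer
codes coincide): let `K/F` have finite degree `ℓ` with `F`-basis `b`, and let
`A 1, …, A ℓ` be `F`-linear subspaces of `F^n`.  The set
`C = { v ∈ K^n : the i-th layer of v lies in A i for all i }` is closed under
multiplication by scalars from `K` if and only if all the `A i` coincide. -/
theorem stmt8 (F K : Type*) [Field F] [Field K] [Algebra F K] (ℓ n : ℕ)
    (b : Module.Basis (Fin ℓ) F K)
    (A : Fin ℓ → Submodule F (Fin n → F)) :
    (∀ (α : K) (v : Fin n → K),
        (∀ i, (fun p => b.repr (v p) i) ∈ A i) →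
        (∀ i, (fun p => b.repr (α * v p) i) ∈ A i)) ↔
      ∀ i j, A i = A j := by
  constructor
  · intro h
    have key : ∀ i j : Fin ℓ, A j ≤ A i := by
      intro i j a ha
      have hbj : b j ≠ 0 := b.ne_zero j
      set α := b i / b j with hα
      have hv : ∀ k, (fun p => b.repr ((a p) • b j) k) ∈ A k := by
        intro k
        by_cases hk : k = j
        · subst hk
          have he : (fun p => b.repr ((a p) • b k) k) = a := by
            funext p
            simp
          rwa [he]
        · have he : (fun p => b.repr ((a p) • b j) k) = 0 := by
            funext p
            simp [Finsupp.single_apply, Ne.symm hk]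
          rw [he]; exact (A k).zero_mem
      have hm := h α (fun p => (a p) • b j) hv i
      have heq : (fun p => b.repr (α * (a p) • b j) i) = a := by
        funext p
        have : α * (a p) • b j = (a p) • b i := by
          rw [mul_smul_comm, div_mul_cancel₀ _ hbj]
        rw [this]
        simp
      rwa [heq] at hm
    intro i j
    exact le_antisymm (key j i) (key i j)
  · intro hA α v hv i
    have key : (fun p => b.repr (α * v p) i)
        = ∑ j, (b.repr (α * b j) i) • (fun p => b.repr (v p) j) := by
      funext p
      have hvp : v p = ∑ j, b.repr (v p) j • b j := (b.sum_repr (v p)).symm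
      calc b.repr (α * v p) i = b.repr (∑ j, b.repr (v p) j • (α * b j)) i := by
            conv_lhs => rw [hvp]
            rw [Finset.mul_sum]
            exact congrArg (fun x => b.repr x i)
              (Finset.sum_congr rfl fun j _ => mul_smul_comm _ _ _)
        _ = ∑ j, b.repr (v p) j * b.repr (α * b j) i := by
            rw [map_sum]
            simp [Finsupp.finset_sum_apply]
        _ = _ := by
            simp [Finset.sum_apply, mul_comm]
    rw [key]
    exact Submodule.sum_mem _ fun j _ => Submodule.smul_mem _ _ ((hA j i) ▸ hv j)
end

section
/- Let C_GC be a generalized concatenated code with inner code B = range(θ) ⊆ F^{n_B} and outer codes A_1,…,A_ℓ (A_i ⊆ K_i^{n_A}), and let C_GC⊥ be its dual code inside F^{n_A×n_B}. Let c ∈ C_GC⊥ be a minimal support codeword such that: for every i ∈ {1,…,ℓ} and every nonzero y ∈ A_i⊥, wt_H(c) < wt_H(y); and for every nonzero z ∈ B⊥, wt_H(c) < 2·wt_H(z). Then the support of c is contained in a single inner block: there exists m ∈ {1,…,n_A} such that c(m',j) = 0 for all m' ≠ m and all j. (Theorem 3: low-weight minimal support dual codewords identify the inner blocks.) -/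
/-- The support of a vector: the set of coordinates where it is nonzero. -/
def supp {E N : Type*} [Zero E] (c : N → E) : Set N := {p | c p ≠ 0}

/-- The Hamming weight of a vector: the number of nonzero coordinates. -/
noncomputable def wt {E N : Type*} [Zero E] (c : N → E) : ℕ := (supp c).ncard

/-- The dual code of a set of vectors, w.r.t. the standard bilinear pairing. -/
def dualCode {E N : Type*} [CommRing E] [Fintype N] (D : Set (N → E)) :
    Set (N → E) :=
  {y | ∀ x ∈ D, ∑ p, x p * y p = 0}

/-- A nonzero codeword of `D` is a minimal support codeword if no nonzero
codeword of `D` has support strictly contained in its support. -/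
def IsMinSupport {E N : Type*} [Zero E] (D : Set (N → E)) (c : N → E) : Prop :=
  c ∈ D ∧ c ≠ 0 ∧ ∀ c' ∈ D, c' ≠ 0 → supp c' ⊆ supp c → supp c' = supp c

lemma exists_dual_one {K V : Type*} [Field K] [AddCommGroup V] [Module K V]
    {v : V} (hv : v ≠ 0) : ∃ ψ : V →ₗ[K] K, ψ v = 1 := by
  obtain ⟨g, hg⟩ := LinearMap.exists_extend
    (((LinearEquiv.toSpanNonzeroSingleton K V v hv).symm : (K ∙ v) ≃ₗ[K] K) : (K ∙ v) →ₗ[K] K)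
  refine ⟨g, ?_⟩
  have h0 := LinearMap.congr_fun hg (⟨v, Submodule.mem_span_singleton_self v⟩ : K ∙ v)
  have h1 : (LinearEquiv.toSpanNonzeroSingleton K V v hv).symm
      (⟨v, Submodule.mem_span_singleton_self v⟩ : K ∙ v) = 1 := by
    rw [LinearEquiv.symm_apply_eq, LinearEquiv.toSpanNonzeroSingleton_one]
  simpa [h1] using h0


/-- Theorem 3: a minimal support codeword `c` of the dual of a generalized
concatenated code whose weight is smaller than all dual distances `d⊥(A i)` of
the outer codes and smaller than twice the dual distance of the inner code
`B = range θ` has its support contained in a single inner block. -/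
theorem stmt9 {F : Type*} [Field F] {ℓ nA nB : ℕ}
    (K : Fin ℓ → Type*) [∀ i, Field (K i)] [∀ i, Algebra F (K i)]
    (θ : (∀ i, K i) →ₗ[F] (Fin nB → F)) (hθ : Function.Injective θ)
    (A : ∀ i, Submodule (K i) (Fin nA → K i))
    (CGC : Set (Fin nA × Fin nB → F))
    (hCGC : CGC = {c | ∃ a : ∀ i, Fin nA → K i,
      (∀ i, a i ∈ A i) ∧ ∀ p : Fin nA × Fin nB, c p = θ (fun i => a i p.1) p.2})
    (c : Fin nA × Fin nB → F)
    (hmin : IsMinSupport (dualCode CGC) c)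
    (hA : ∀ i, ∀ y ∈ dualCode ((A i : Set (Fin nA → K i))), y ≠ 0 → wt c < wt y)
    (hB : ∀ z ∈ dualCode (Set.range θ), z ≠ 0 → wt c < 2 * wt z) :
    ∃ m : Fin nA, ∀ m' : Fin nA, m' ≠ m → ∀ j : Fin nB, c (m', j) = 0 := by
  classical
  by_cases hone : ∃ m : Fin nA, (∃ j, c (m, j) ≠ 0) ∧
      ∀ x : (∀ i, K i), ∑ j, θ x j * c (m, j) = 0
  · -- Case A: some nonzero block is orthogonal to the inner code
    obtain ⟨m, ⟨j0, hj0⟩, hm⟩ := hone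
    refine ⟨m, ?_⟩
    set c' : Fin nA × Fin nB → F := fun p => if p.1 = m then c p else 0 with hc'
    have hmem : c' ∈ dualCode CGC := by
      intro x hx
      rw [hCGC] at hx
      obtain ⟨a, ha, hxa⟩ := hx
      rw [Fintype.sum_prod_type]
      have h1 : ∀ m' : Fin nA, ∑ j, x (m', j) * c' (m', j)
          = if m' = m then ∑ j, x (m', j) * c (m', j) else 0 := by
        intro m'
        by_cases h : m' = m
        · subst h; simp [hc']
        · simp [hc', h]
      rw [Finset.sum_congr rfl (fun m' _ => h1 m')]
      rw [Finset.sum_ite_eq' Finset.univ m (fun m' => ∑ j, x (m', j) * c (m', j))]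
      simp only [Finset.mem_univ, if_true]
      have h2 : ∀ j, x (m, j) = θ (fun i => a i m) j := fun j => hxa (m, j)
      simp_rw [h2]
      exact hm _
    have hne : c' ≠ 0 := by
      intro h0
      apply hj0
      have := congrFun h0 (m, j0)
      simpa [hc'] using this
    have hsub : supp c' ⊆ supp c := by
      intro p hp
      have h1 : c' p ≠ 0 := hp
      show c p ≠ 0
      intro h0
      exact h1 (by simp [hc', h0])
    have heq := hmin.2.2 c' hmem hne hsub
    intro m' hm' j
    by_contra h
    have hpmem : (m', j) ∈ supp c := h
    rw [← heq] at hpmem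
    exact hpmem (by simp [hc', hm'])
  · -- Case B: impossible
    exfalso
    push_neg at hone
    obtain ⟨p0, hp0⟩ : ∃ p, c p ≠ 0 := by
      by_contra h; push_neg at h; exact hmin.2.1 (funext fun p => h p)
    obtain ⟨m0, j0⟩ := p0
    obtain ⟨x0, hx0⟩ := hone m0 ⟨j0, hp0⟩
    have hx0' : ∑ j, θ (∑ i, Pi.single i (x0 i)) j * c (m0, j) ≠ 0 := by
      rwa [Finset.univ_sum_single]
    have hexi : ∃ i, ∑ j, θ (Pi.single i (x0 i)) j * c (m0, j) ≠ 0 := by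
      by_contra hall
      push_neg at hall
      apply hx0'
      rw [map_sum]
      simp_rw [Finset.sum_apply, Finset.sum_mul]
      rw [Finset.sum_comm]
      simp [hall]
    obtain ⟨i, hi⟩ := hexi
    -- the linear functionals on K i given by each block
    set μ : Fin nA → ((K i) →ₗ[F] F) := fun m =>
      { toFun := fun z => ∑ j, θ (Pi.single i z) j * c (m, j)
        map_add' := by
          intro z w
          simp [Pi.single_add, add_mul, Finset.sum_add_distrib]
        map_smul' := by
          intro r z
          simp only [Pi.single_smul, map_smul, Pi.smul_apply, smul_eq_mul, RingHom.id_apply]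
          rw [Finset.mul_sum]
          simp [mul_assoc] } with hμdef
    have hμ0 : μ m0 ≠ 0 := by
      intro h
      apply hi
      have := congrFun (congrArg DFunLike.coe h) (x0 i)
      simpa [hμdef] using this
    -- K i-module structure on (K i) →ₗ[F] F  by precomposition with multiplication
    letI : SMul (K i) ((K i) →ₗ[F] F) := ⟨fun k f => f.comp (LinearMap.mulLeft F k)⟩
    letI : Module (K i) ((K i) →ₗ[F] F) :=
      { one_smul := fun f => by ext z; show f (1 * z) = f z; rw [one_mul]
        mul_smul := fun a b f => by
          ext z; show f (a * b * z) = f (b * (a * z)); rw [← mul_assoc, mul_comm a b]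
        smul_zero := fun a => by ext z; rfl
        smul_add := fun a f g => by ext z; rfl
        add_smul := fun a b f => by
          ext z; show f ((a + b) * z) = f (a * z) + f (b * z); rw [add_mul, map_add]
        zero_smul := fun f => by ext z; show f (0 * z) = 0; rw [zero_mul, map_zero] }
    obtain ⟨ψ, hψ⟩ := exists_dual_one (K := K i) hμ0
    set y : Fin nA → K i := fun m => ψ (μ m) with hydef
    have hsmul_apply : ∀ (k : K i) (f : (K i) →ₗ[F] F) (z : K i), (k • f) z = f (k * z) :=
      fun _ _ _ => rfl
    have hymem : y ∈ dualCode ((A i : Set (Fin nA → K i))) := by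
      intro a ha
      have key : (∑ m, a m • μ m : (K i) →ₗ[F] F) = 0 := by
        ext z
        rw [LinearMap.sum_apply]
        simp only [hsmul_apply, LinearMap.zero_apply]
        -- ∑ m, μ m (a m * z) = 0 : use the dual property with the concatenated codeword
        set aT : ∀ i', Fin nA → K i' := Pi.single i (fun m => a m * z) with haT
        have haTmem : ∀ i', aT i' ∈ A i' := by
          intro i'
          by_cases h : i' = i
          · subst h
            rw [haT, Pi.single_eq_same]
            have : (fun m => a m * z) = z • a := by
              funext m; simp [mul_comm]
            rw [this]
            exact Submodule.smul_mem _ z ha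
          · rw [haT, Pi.single_eq_of_ne h]
            exact Submodule.zero_mem _
        have hxw : (fun p : Fin nA × Fin nB => θ (fun i' => aT i' p.1) p.2) ∈ CGC := by
          rw [hCGC]
          exact ⟨aT, haTmem, fun p => rfl⟩
        have hdual := hmin.1 _ hxw
        rw [Fintype.sum_prod_type] at hdual
        have hrw : ∀ m, (fun i' => aT i' m) = Pi.single i (a m * z) := by
          intro m
          funext i'
          by_cases h : i' = i
          · subst h; simp [haT]
          · simp [haT, Pi.single_eq_of_ne h]
        simp only [hrw] at hdual
        simpa [hμdef] using hdual
      calc ∑ m, a m * y m = ∑ m, ψ (a m • μ m) := by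
            refine Finset.sum_congr rfl fun m _ => ?_
            rw [map_smul, smul_eq_mul, hydef]
        _ = ψ (∑ m, a m • μ m) := (map_sum ψ _ _).symm
        _ = 0 := by rw [key, map_zero]
    have hyne : y ≠ 0 := by
      intro h
      have := congrFun h m0
      rw [hydef] at this
      simp only [Pi.zero_apply] at this
      rw [hψ] at this
      exact one_ne_zero this
    have hsuppy : supp y ⊆ {m : Fin nA | ∃ j, c (m, j) ≠ 0} := by
      intro m hm
      by_contra hc0
      simp only [Set.mem_setOf_eq, not_exists, not_not] at hc0
      apply hm
      have : μ m = 0 := by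
        ext z
        simp [hμdef, hc0]
      show ψ (μ m) = 0
      rw [this, map_zero]
    have hcard : ({m : Fin nA | ∃ j, c (m, j) ≠ 0}).ncard ≤ wt c := by
      apply Set.ncard_le_ncard_of_injOn
        (fun m => (m, if h : ∃ j, c (m, j) ≠ 0 then h.choose else j0))
      · intro m hm
        simp only [Set.mem_setOf_eq] at hm
        show c (m, if h : ∃ j, c (m, j) ≠ 0 then h.choose else j0) ≠ 0
        rw [dif_pos hm]
        exact hm.choose_spec
      · intro a _ b _ h
        exact congrArg Prod.fst h
    have hwy : wt y ≤ wt c :=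
      le_trans (Set.ncard_le_ncard hsuppy (Set.toFinite _)) hcard
    exact absurd (hA i y hymem hyne) (not_lt.mpr hwy)
end

section
/- Let C_GC be a generalized concatenated code with inner code B = range(θ) ⊆ F^{n_B} and outer codes A_1,…,A_ℓ. Let M ⊆ {1,…,n_A} be a set of r inner-block indices such that for every i ∈ {1,…,ℓ} and every nonzero y ∈ A_i⊥ ⊆ K_i^{n_A}, r < wt_H(y). Then the projection of C_GC onto the blocks in M is all of B^M: for every choice of vectors f_m ∈ B (m ∈ M) there exists a codeword c ∈ C_GC with c(m) = f_m for all m ∈ M. (The claim underlying Step 3.1 of Sendrier's attack and the proof of Theorem 3: fewer than min_i d⊥(A_i) inner blocks of a GC codeword can be filled with arbitrary inner codewords.) -/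
/-- Key lemma: if every nonzero dual codeword has weight `> |M|`, then the
projection of the code onto the coordinates in `M` is surjective. -/
lemma proj_surj {K : Type*} [Field K] {n : ℕ} (A : Submodule K (Fin n → K))
    (M : Finset (Fin n))
    (hM : ∀ y ∈ dualCode ((A : Set (Fin n → K))), y ≠ 0 → M.card < wt y)
    (t : Fin n → K) : ∃ a ∈ A, ∀ m ∈ M, a m = t m := by
  classical
  set π : (Fin n → K) →ₗ[K] ({m // m ∈ M} → K) :=
    LinearMap.funLeft K K (fun m => (m : Fin n)) with hπ
  have hW : A.map π = ⊤ := by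
    by_contra hne
    obtain ⟨φ, hφne, hφ⟩ :=
      (A.map π).exists_dual_map_eq_bot_of_lt_top (lt_top_iff_ne_top.mpr hne)
        inferInstance
    set y : Fin n → K := fun p =>
      if h : p ∈ M then φ (fun q => if (⟨p, h⟩ : {m // m ∈ M}) = q then 1 else 0)
      else 0 with hy
    have hker : ∀ v ∈ A.map π, φ v = 0 := by
      intro v hv
      have : φ v ∈ (A.map π).map φ := Submodule.mem_map_of_mem hv
      rw [hφ] at this
      exact (Submodule.mem_bot K).mp this
    have hyd : y ∈ dualCode ((A : Set (Fin n → K))) := by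
      intro x hx
      have h0 : φ (π x) = 0 := hker _ (Submodule.mem_map_of_mem hx)
      rw [LinearMap.pi_apply_eq_sum_univ φ (π x), Finset.univ_eq_attach] at h0
      rw [← h0]
      rw [← Finset.sum_subset (Finset.subset_univ M)
        (by intro p _ hp; simp [hy, hp])]
      rw [← Finset.sum_attach M (fun p => x p * y p)]
      refine Finset.sum_congr rfl fun q _ => ?_
      simp only [hy, dif_pos q.2, Subtype.coe_eta, hπ, LinearMap.funLeft_apply,
        smul_eq_mul]
    have hy0 : y ≠ 0 := by
      intro h0
      apply hφne
      refine LinearMap.ext fun v => ?_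
      rw [LinearMap.pi_apply_eq_sum_univ φ v]
      simp only [LinearMap.zero_apply]
      refine Finset.sum_eq_zero fun q _ => ?_
      have hq : y (q : Fin n) = 0 := by rw [h0]; rfl
      simp only [hy, dif_pos q.2, Subtype.coe_eta] at hq
      rw [hq, smul_zero]
    have hwt : wt y ≤ M.card := by
      have hsub : supp y ⊆ (M : Set (Fin n)) := by
        intro p hp
        by_contra hpM
        exact hp (dif_neg (by simpa using hpM))
      calc wt y ≤ (M : Set (Fin n)).ncard :=
            Set.ncard_le_ncard hsub M.finite_toSet
        _ = M.card := by simp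
    exact absurd (hM y hyd hy0) (not_lt.mpr hwt)
  have : (fun m : {m // m ∈ M} => t m) ∈ A.map π := hW ▸ Submodule.mem_top
  obtain ⟨a, haA, ha⟩ := this
  exact ⟨a, haA, fun m hm => congrFun ha ⟨m, hm⟩⟩

/-- If `M` is a set of inner-block indices with `|M| < d⊥(A i)` for all outer
codes `A i`, then the projection of the generalized concatenated code onto the
blocks in `M` is all of `B^M`, where `B = range θ` is the inner code. -/
theorem stmt10 {F : Type*} [Field F] {ℓ nA nB : ℕ}
    (K : Fin ℓ → Type*) [∀ i, Field (K i)] [∀ i, Algebra F (K i)]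
    (θ : (∀ i, K i) →ₗ[F] (Fin nB → F)) (hθ : Function.Injective θ)
    (A : ∀ i, Submodule (K i) (Fin nA → K i))
    (CGC : Set (Fin nA × Fin nB → F))
    (hCGC : CGC = {c | ∃ a : ∀ i, Fin nA → K i,
      (∀ i, a i ∈ A i) ∧ ∀ p : Fin nA × Fin nB, c p = θ (fun i => a i p.1) p.2})
    (M : Finset (Fin nA))
    (hM : ∀ i, ∀ y ∈ dualCode ((A i : Set (Fin nA → K i))), y ≠ 0 →
      M.card < wt y) :
    ∀ f : Fin nA → Fin nB → F, (∀ m ∈ M, f m ∈ Set.range θ) →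
      ∃ c ∈ CGC, ∀ m ∈ M, ∀ j : Fin nB, c (m, j) = f m j := by
  classical
  intro f hf
  -- choose preimages under θ
  have hg : ∀ m : Fin nA, ∃ g : ∀ i, K i, m ∈ M → θ g = f m := by
    intro m
    by_cases hm : m ∈ M
    · obtain ⟨g, hg⟩ := hf m hm
      exact ⟨g, fun _ => hg⟩
    · exact ⟨0, fun h => absurd h hm⟩
  choose g hgθ using hg
  -- for each i, find a codeword of A i matching g · i on M
  have ha : ∀ i, ∃ a ∈ A i, ∀ m ∈ M, a m = g m i := fun i =>
    proj_surj (A i) M (hM i) (fun m => g m i)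
  choose a haA haM using ha
  refine ⟨fun p => θ (fun i => a i p.1) p.2, ?_, ?_⟩
  · rw [hCGC]
    exact ⟨a, haA, fun p => rfl⟩
  · intro m hm j
    have h1 : (fun i => a i m) = g m := funext fun i => haM i m hm
    show θ (fun i => a i m) j = f m j
    rw [h1, hgθ m hm]
end

section
/- Let F be a field and C ⊆ F^n a linear code. Then the set P(C) of minimal support codewords of C connects supp(C) (i.e., any two positions in supp(C) are connected in P(C)) if and only if C is not the direct sum of two disjoint-support codes, i.e., there do not exist linear subcodes C_1, C_2 of C with C_1 + C_2 = C, supp(C_1) ∩ supp(C_2) = ∅, supp(C_1) ≠ ∅ and supp(C_2) ≠ ∅. (Lemma 3, Sendrier's Proposition 15.) -/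
/-- The support of a set of vectors: the union of the supports. -/
def suppSet {E N : Type*} [Zero E] (D : Set (N → E)) : Set N :=
  ⋃ c ∈ D, supp c

/-- Positions `p` and `q` are connected in a set `S` of vectors if there is a
finite chain of vectors of `S`, consecutive ones having intersecting supports,
starting at a vector whose support contains `p` and ending at one whose
support contains `q`. -/
def ConnectedIn {E N : Type*} [Zero E] (S : Set (N → E)) (p q : N) : Prop :=
  ∃ (r : ℕ) (cs : Fin (r + 1) → N → E),
    (∀ k, cs k ∈ S) ∧ p ∈ supp (cs 0) ∧ q ∈ supp (cs (Fin.last r)) ∧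
    ∀ k : Fin r, (supp (cs k.castSucc) ∩ supp (cs k.succ)).Nonempty

section Aux

open Classical

variable {F : Type*} [Field F] {n : ℕ}

lemma mem_supp_iff {c : Fin n → F} {p : Fin n} : p ∈ supp c ↔ c p ≠ 0 := Iff.rfl

lemma supp_zero : supp (0 : Fin n → F) = ∅ := by
  ext p; simp [supp]

lemma eq_zero_of_supp_empty {c : Fin n → F} (h : supp c = ∅) : c = 0 := by
  funext p
  by_contra hp
  exact absurd (h ▸ (hp : p ∈ supp c)) (Set.notMem_empty p)

lemma mem_suppSet_iff {D : Set (Fin n → F)} {x : Fin n} :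
    x ∈ suppSet D ↔ ∃ c ∈ D, x ∈ supp c := by
  simp [suppSet]

lemma supp_subset_suppSet {D : Set (Fin n → F)} {c : Fin n → F} (hc : c ∈ D) :
    supp c ⊆ suppSet D := fun _ hx => mem_suppSet_iff.2 ⟨c, hc, hx⟩

lemma suppSet_mono {D D' : Set (Fin n → F)} (h : D ⊆ D') : suppSet D ⊆ suppSet D' := by
  intro x hx
  obtain ⟨c, hc, hxc⟩ := mem_suppSet_iff.1 hx
  exact mem_suppSet_iff.2 ⟨c, h hc, hxc⟩

lemma supp_add_subset (a b : Fin n → F) : supp (a + b) ⊆ supp a ∪ supp b := by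
  intro p hp
  rw [Set.mem_union, mem_supp_iff, mem_supp_iff]
  by_contra h
  push_neg at h
  exact hp (by simp [Pi.add_apply, h.1, h.2])

lemma supp_smul_subset (r : F) (a : Fin n → F) : supp (r • a) ⊆ supp a := by
  intro p hp
  simp only [mem_supp_iff, Pi.smul_apply, smul_eq_mul] at hp ⊢
  intro h; exact hp (by simp [h])

/-- The submodule of vectors supported inside `A`. -/
def suppSub (A : Set (Fin n)) : Submodule F (Fin n → F) where
  carrier := {c | supp c ⊆ A}
  add_mem' := by
    intro a b ha hb
    exact (supp_add_subset a b).trans (Set.union_subset ha hb)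
  zero_mem' := by
    simp only [Set.mem_setOf_eq, supp_zero]
    exact Set.empty_subset A
  smul_mem' := fun r a ha => (supp_smul_subset r a).trans ha

lemma mem_suppSub {A : Set (Fin n)} {c : Fin n → F} :
    c ∈ (suppSub A : Submodule F (Fin n → F)) ↔ supp c ⊆ A := Iff.rfl

/-- A minimal-support codeword exists inside the support of any nonzero codeword. -/
lemma exists_min_within (C : Submodule F (Fin n → F)) {c : Fin n → F}
    (hc : c ∈ C) (hc0 : c ≠ 0) :
    ∃ m, IsMinSupport (C : Set (Fin n → F)) m ∧ supp m ⊆ supp c := by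
  set T : Set ℕ := {k | ∃ d, d ∈ C ∧ d ≠ 0 ∧ supp d ⊆ supp c ∧ (supp d).ncard = k} with hT
  have hTne : T.Nonempty := ⟨(supp c).ncard, c, hc, hc0, subset_rfl, rfl⟩
  obtain ⟨d, hd, hd0, hdc, hdk⟩ := Nat.sInf_mem hTne
  refine ⟨d, ⟨hd, hd0, ?_⟩, hdc⟩
  intro d' hd' hd'0 hsub
  have h1 : sInf T ≤ (supp d').ncard :=
    Nat.sInf_le ⟨d', hd', hd'0, hsub.trans hdc, rfl⟩
  rw [← hdk] at h1
  exact Set.eq_of_subset_of_ncard_le hsub h1 (Set.toFinite _)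

/-- A minimal-support codeword exists through any point of the support of the code. -/
lemma exists_min_through (C : Submodule F (Fin n → F)) {p : Fin n}
    (hp : p ∈ suppSet (C : Set (Fin n → F))) :
    ∃ m, IsMinSupport (C : Set (Fin n → F)) m ∧ p ∈ supp m := by
  obtain ⟨c, hc, hpc⟩ := mem_suppSet_iff.1 hp
  set T : Set ℕ := {k | ∃ d, d ∈ C ∧ p ∈ supp d ∧ (supp d).ncard = k} with hT
  have hTne : T.Nonempty := ⟨(supp c).ncard, c, hc, hpc, rfl⟩
  obtain ⟨m, hm, hpm, hmk⟩ := Nat.sInf_mem hTne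
  have hm0 : m ≠ 0 := by
    intro h; rw [h] at hpm; simp [supp_zero] at hpm
  refine ⟨m, ⟨hm, hm0, ?_⟩, hpm⟩
  intro d hd hd0 hsub
  by_contra hne
  have hss : supp d ⊂ supp m := hsub.ssubset_of_ne hne
  by_cases hpd : p ∈ supp d
  · have h1 : sInf T ≤ (supp d).ncard := Nat.sInf_le ⟨d, hd, hpd, rfl⟩
    rw [← hmk] at h1
    have h2 : (supp d).ncard < (supp m).ncard :=
      Set.ncard_lt_ncard hss (Set.toFinite _)
    omega
  · -- subtract a multiple of d to get a smaller support through p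
    obtain ⟨q, hq⟩ : (supp d).Nonempty := by
      by_contra h
      exact hd0 (eq_zero_of_supp_empty (Set.not_nonempty_iff_eq_empty.1 h))
    have hdq : d q ≠ 0 := hq
    set m' : Fin n → F := m - (m q / d q) • d with hm'
    have hm'C : m' ∈ C := Submodule.sub_mem _ hm (Submodule.smul_mem _ _ hd)
    have hm'p : p ∈ supp m' := by
      have hdp : d p = 0 := not_not.1 hpd
      simp only [mem_supp_iff, hm', Pi.sub_apply, Pi.smul_apply, smul_eq_mul, hdp,
        mul_zero, sub_zero]
      exact hpm
    have hm'sub : supp m' ⊆ supp m := by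
      intro x hx
      by_contra hxm
      have hmx : m x = 0 := not_not.1 hxm
      have hdx : d x = 0 := by
        by_contra hdx
        exact hxm (hsub hdx)
      simp only [mem_supp_iff, hm', Pi.sub_apply, Pi.smul_apply, smul_eq_mul, hmx, hdx,
        mul_zero, sub_zero] at hx
      exact hx rfl
    have hm'q : q ∉ supp m' := by
      simp only [mem_supp_iff, hm', Pi.sub_apply, Pi.smul_apply, smul_eq_mul,
        div_mul_cancel₀ _ hdq, sub_self, not_not]
    have hqm : q ∈ supp m := hsub hq
    have hss' : supp m' ⊂ supp m := hm'sub.ssubset_of_ne (by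
      intro h; exact hm'q (h ▸ hqm))
    have h1 : sInf T ≤ (supp m').ncard := Nat.sInf_le ⟨m', hm'C, hm'p, rfl⟩
    rw [← hmk] at h1
    have h2 : (supp m').ncard < (supp m).ncard := Set.ncard_lt_ncard hss' (Set.toFinite _)
    omega

lemma connected_single {S : Set (Fin n → F)} {m : Fin n → F} (hm : m ∈ S)
    {p q : Fin n} (hp : p ∈ supp m) (hq : q ∈ supp m) : ConnectedIn S p q :=
  ⟨0, fun _ => m, fun _ => hm, hp, hq, fun k => k.elim0⟩

lemma ConnectedIn.append {S : Set (Fin n → F)} {p x y : Fin n} (h : ConnectedIn S p x)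
    {m : Fin n → F} (hm : m ∈ S) (hx : x ∈ supp m) (hy : y ∈ supp m) :
    ConnectedIn S p y := by
  obtain ⟨r, cs, hmem, hp, hq, hchain⟩ := h
  refine ⟨r + 1, Fin.snoc cs m, ?_, ?_, ?_, ?_⟩
  · intro k
    refine Fin.lastCases ?_ ?_ k
    · simpa [Fin.snoc_last] using hm
    · intro i; simpa [Fin.snoc_castSucc] using hmem i
  · have : (0 : Fin (r + 2)) = Fin.castSucc 0 := rfl
    rw [this, Fin.snoc_castSucc]
    exact hp
  · simpa [Fin.snoc_last] using hy
  · intro k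
    refine Fin.lastCases ?_ ?_ k
    · simp only [Fin.succ_last, Fin.snoc_last, Fin.snoc_castSucc]
      exact ⟨x, hq, hx⟩
    · intro j
      simp only [Fin.succ_castSucc, Fin.snoc_castSucc]
      exact hchain j

end Aux

/-- Lemma 3 (Sendrier's Proposition 15): the minimal support codewords of a
linear code `C` connect `supp(C)` if and only if `C` is not the direct sum of
two disjoint-support codes. -/
theorem stmt11 {F : Type*} [Field F] {n : ℕ} (C : Submodule F (Fin n → F)) :
    (∀ p ∈ suppSet (C : Set (Fin n → F)), ∀ q ∈ suppSet (C : Set (Fin n → F)),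
      ConnectedIn {c | IsMinSupport (C : Set (Fin n → F)) c} p q) ↔
    ¬ ∃ C1 C2 : Submodule F (Fin n → F), C1 ≤ C ∧ C2 ≤ C ∧ C1 ⊔ C2 = C ∧
      suppSet (C1 : Set (Fin n → F)) ∩ suppSet (C2 : Set (Fin n → F)) = ∅ ∧
      suppSet (C1 : Set (Fin n → F)) ≠ ∅ ∧
      suppSet (C2 : Set (Fin n → F)) ≠ ∅ := by
  classical
  constructor
  · -- connected → no decomposition
    rintro hconn ⟨C1, C2, hC1, hC2, hsupC, hdisj, hne1, hne2⟩
    obtain ⟨p, hp1⟩ := Set.nonempty_iff_ne_empty.2 hne1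
    obtain ⟨q, hq2⟩ := Set.nonempty_iff_ne_empty.2 hne2
    have hpC : p ∈ suppSet (C : Set (Fin n → F)) :=
      suppSet_mono (fun x hx => hC1 hx) hp1
    have hqC : q ∈ suppSet (C : Set (Fin n → F)) :=
      suppSet_mono (fun x hx => hC2 hx) hq2
    obtain ⟨r, cs, hmem, hp0, hqlast, hchain⟩ := hconn p hpC q hqC
    -- every minimal codeword lies on one side
    have hside : ∀ m, IsMinSupport (C : Set (Fin n → F)) m →
        supp m ⊆ suppSet (C1 : Set (Fin n → F)) ∨
        supp m ⊆ suppSet (C2 : Set (Fin n → F)) := by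
      intro m hmps
      obtain ⟨hmC, hm0, hmin⟩ := hmps
      have hmC' : m ∈ C1 ⊔ C2 := hsupC ▸ hmC
      obtain ⟨c1, hc1, c2, hc2, hsum⟩ := Submodule.mem_sup.1 hmC'
      have key : ∀ x, c1 x = 0 ∨ c2 x = 0 := by
        intro x
        by_contra h
        push_neg at h
        have hx : x ∈ suppSet (C1 : Set (Fin n → F)) ∩ suppSet (C2 : Set (Fin n → F)) :=
          ⟨supp_subset_suppSet hc1 h.1, supp_subset_suppSet hc2 h.2⟩
        rw [hdisj] at hx
        exact hx
      have hm_eq : supp m = supp c1 ∪ supp c2 := by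
        ext x
        simp only [mem_supp_iff, Set.mem_union, ← hsum, Pi.add_apply]
        rcases key x with h | h <;> simp [h]
      by_cases h1 : c1 = 0
      · right
        rw [hm_eq, h1, supp_zero, Set.empty_union]
        exact supp_subset_suppSet hc2
      by_cases h2 : c2 = 0
      · left
        rw [hm_eq, h2, supp_zero, Set.union_empty]
        exact supp_subset_suppSet hc1
      · exfalso
        have hsub1 : supp c1 ⊆ supp m := by
          rw [hm_eq]; exact Set.subset_union_left
        have heq := hmin c1 (hC1 hc1) h1 hsub1
        obtain ⟨x, hx⟩ : (supp c2).Nonempty := by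
          by_contra h
          exact h2 (eq_zero_of_supp_empty (Set.not_nonempty_iff_eq_empty.1 h))
        have hxm : x ∈ supp m := by
          rw [hm_eq]; exact Set.subset_union_right hx
        have hxc1 : x ∈ supp c1 := heq ▸ hxm
        have hx12 : x ∈ suppSet (C1 : Set (Fin n → F)) ∩ suppSet (C2 : Set (Fin n → F)) :=
          ⟨supp_subset_suppSet hc1 hxc1, supp_subset_suppSet hc2 hx⟩
        rw [hdisj] at hx12
        exact hx12
    -- all chain elements stay on the C1 side
    have hall : ∀ k : Fin (r + 1), supp (cs k) ⊆ suppSet (C1 : Set (Fin n → F)) := by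
      intro k
      induction k using Fin.induction with
      | zero =>
        rcases hside _ (hmem 0) with h | h
        · exact h
        · exfalso
          have hx : p ∈ suppSet (C1 : Set (Fin n → F)) ∩ suppSet (C2 : Set (Fin n → F)) :=
            ⟨hp1, h hp0⟩
          rw [hdisj] at hx
          exact hx
      | succ i ih =>
        obtain ⟨x, hx1, hx2⟩ := hchain i
        rcases hside _ (hmem i.succ) with h | h
        · exact h
        · exfalso
          have hx : x ∈ suppSet (C1 : Set (Fin n → F)) ∩ suppSet (C2 : Set (Fin n → F)) :=
            ⟨ih hx1, h hx2⟩
          rw [hdisj] at hx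
          exact hx
    have hq12 : q ∈ suppSet (C1 : Set (Fin n → F)) ∩ suppSet (C2 : Set (Fin n → F)) :=
      ⟨hall (Fin.last r) hqlast, hq2⟩
    rw [hdisj] at hq12
    exact hq12
  · -- no decomposition → connected
    intro hno p hp q hq
    by_contra hcon
    apply hno
    set P : Set (Fin n → F) := {c | IsMinSupport (C : Set (Fin n → F)) c} with hP
    set A : Set (Fin n) := {x | ConnectedIn P p x} with hA
    have hcomp : ∀ m ∈ P, ∀ x ∈ supp m, x ∈ A → supp m ⊆ A :=
      fun m hm x hx hxA y hy => ConnectedIn.append hxA hm hx hy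
    have hside : ∀ m ∈ P, supp m ⊆ A ∨ supp m ∩ A = ∅ := by
      intro m hm
      by_cases h : (supp m ∩ A).Nonempty
      · obtain ⟨x, hx, hxA⟩ := h
        exact Or.inl (hcomp m hm x hx hxA)
      · exact Or.inr (Set.not_nonempty_iff_eq_empty.1 h)
    set C1 : Submodule F (Fin n → F) := C ⊓ suppSub A with hC1def
    set C2 : Submodule F (Fin n → F) := C ⊓ suppSub Aᶜ with hC2def
    have hsub1 : suppSet (C1 : Set (Fin n → F)) ⊆ A := by
      intro x hx
      obtain ⟨c, hc, hxc⟩ := mem_suppSet_iff.1 hx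
      exact (Submodule.mem_inf.1 hc).2 hxc
    have hsub2 : suppSet (C2 : Set (Fin n → F)) ⊆ Aᶜ := by
      intro x hx
      obtain ⟨c, hc, hxc⟩ := mem_suppSet_iff.1 hx
      exact (Submodule.mem_inf.1 hc).2 hxc
    refine ⟨C1, C2, inf_le_left, inf_le_left, ?_, ?_, ?_, ?_⟩
    · -- C1 ⊔ C2 = C
      apply le_antisymm (sup_le inf_le_left inf_le_left)
      intro c hc
      have hind : ∀ N : ℕ, ∀ c ∈ C, (supp c).ncard ≤ N → c ∈ C1 ⊔ C2 := by
        intro N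
        induction N with
        | zero =>
          intro c hc hcard
          have hempty : supp c = ∅ := by
            rw [← Set.ncard_eq_zero (Set.toFinite _)]
            omega
          rw [eq_zero_of_supp_empty hempty]
          exact Submodule.zero_mem _
        | succ N ih =>
          intro c hc hcard
          by_cases hc0 : c = 0
          · rw [hc0]; exact Submodule.zero_mem _
          obtain ⟨m, hmP, hmsub⟩ := exists_min_within C hc hc0
          obtain ⟨hmC, hm0, hmin⟩ := hmP
          obtain ⟨qq, hqq⟩ : (supp m).Nonempty := by
            by_contra h
            exact hm0 (eq_zero_of_supp_empty (Set.not_nonempty_iff_eq_empty.1 h))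
          have hmq : m qq ≠ 0 := hqq
          set lam : F := c qq / m qq with hlam
          set c' : Fin n → F := c - lam • m with hc'
          have hc'C : c' ∈ C := Submodule.sub_mem _ hc (Submodule.smul_mem _ _ hmC)
          have hc'sub : supp c' ⊆ supp c := by
            intro x hx
            by_contra hxc
            have hcx : c x = 0 := not_not.1 hxc
            have hmx : m x = 0 := by
              by_contra hmx
              exact hxc (hmsub hmx)
            simp only [mem_supp_iff, hc', Pi.sub_apply, Pi.smul_apply, smul_eq_mul,
              hcx, hmx, mul_zero, sub_zero] at hx
            exact hx rfl
          have hc'q : qq ∉ supp c' := by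
            simp only [mem_supp_iff, hc', hlam, Pi.sub_apply, Pi.smul_apply, smul_eq_mul,
              div_mul_cancel₀ _ hmq, sub_self, not_not]
          have hqc : qq ∈ supp c := hmsub hqq
          have hcard' : (supp c').ncard ≤ N := by
            have hss : supp c' ⊂ supp c :=
              hc'sub.ssubset_of_ne (fun h => hc'q (h ▸ hqc))
            have := Set.ncard_lt_ncard hss (Set.toFinite _)
            omega
          have h1 : c' ∈ C1 ⊔ C2 := ih c' hc'C hcard'
          have hm12 : lam • m ∈ C1 ⊔ C2 := by
            have hmemC : lam • m ∈ C := Submodule.smul_mem _ _ hmC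
            rcases hside m ⟨hmC, hm0, hmin⟩ with h | h
            · exact Submodule.mem_sup_left
                (Submodule.mem_inf.2 ⟨hmemC, (supp_smul_subset lam m).trans h⟩)
            · refine Submodule.mem_sup_right (Submodule.mem_inf.2 ⟨hmemC, ?_⟩)
              intro x hx hxA
              have hx' : x ∈ supp m ∩ A := ⟨supp_smul_subset lam m hx, hxA⟩
              rw [h] at hx'
              exact hx'
          have hceq : c = c' + lam • m := by
            rw [hc']; abel
          rw [hceq]
          exact Submodule.add_mem _ h1 hm12
      exact hind _ c hc le_rfl
    · -- disjoint supports
      apply Set.eq_empty_of_subset_empty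
      rintro x ⟨hx1, hx2⟩
      exact (hsub2 hx2) (hsub1 hx1)
    · -- supp C1 nonempty
      obtain ⟨m, hmP, hpm⟩ := exists_min_through C hp
      have hmP' : m ∈ P := hmP
      have hpA : p ∈ A := connected_single hmP' hpm hpm
      have hmA : supp m ⊆ A := hcomp m hmP' p hpm hpA
      have : p ∈ suppSet (C1 : Set (Fin n → F)) :=
        supp_subset_suppSet (Submodule.mem_inf.2 ⟨hmP.1, hmA⟩) hpm
      exact Set.nonempty_iff_ne_empty.1 ⟨p, this⟩
    · -- supp C2 nonempty
      obtain ⟨m, hmP, hqm⟩ := exists_min_through C hq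
      have hmP' : m ∈ P := hmP
      have hmA : supp m ⊆ Aᶜ := by
        intro x hx hxA
        exact hcon (ConnectedIn.append hxA hmP' hx hqm)
      have : q ∈ suppSet (C2 : Set (Fin n → F)) :=
        supp_subset_suppSet (Submodule.mem_inf.2 ⟨hmP.1, hmA⟩) hqm
      exact Set.nonempty_iff_ne_empty.1 ⟨q, this⟩
end

section
/- Let C_GC be a generalized concatenated code with injective F-linear map θ : (K_1 × ⋯ × K_ℓ) → F^{n_B} and outer codes A_1,…,A_ℓ. For j = 1,…,ℓ define the nested inner codes B_j := θ({ a ∈ K_1 × ⋯ × K_ℓ : a_i = 0 for all i < j }) ⊆ F^{n_B}. Suppose d_1,…,d_ℓ and δ_1,…,δ_ℓ are such that every nonzero element of B_j has Hamming weight at least d_j, and every nonzero element of A_j ⊆ K_j^{n_A} has Hamming weight at least δ_j. Then every nonzero codeword of C_GC, viewed as a vector in F^{n_A×n_B}, has Hamming weight at least min_{1≤j≤ℓ} (δ_j · d_j). (The Blokh–Zyablov lower bound on the minimum distance of a generalized concatenated code, d_GC ≥ min_j (d_A^{(j)} · d_B^{(j)}), stated in the appendix.) -/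
open Classical in
lemma wt_eq_card {E N : Type*} [Zero E] [Fintype N] (c : N → E) :
    wt c = (Finset.univ.filter (fun p => c p ≠ 0)).card := by
  classical
  simp [wt, supp, Set.ncard_eq_toFinset_card', Set.toFinset_setOf]

/-- Blokh–Zyablov bound: if every nonzero element of the nested inner code
`B_j = θ({a : a_i = 0 for i < j})` has Hamming weight at least `d j` and every
nonzero codeword of the outer code `A j` has Hamming weight at least `δ j`,
then every nonzero codeword of the generalized concatenated code has Hamming
weight at least `min_j (δ j * d j)`. -/
theorem stmt14 {F : Type*} [Field F] {ℓ nA nB : ℕ} (hℓ : 0 < ℓ)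
    (K : Fin ℓ → Type*) [∀ i, Field (K i)] [∀ i, Algebra F (K i)]
    (θ : (∀ i, K i) →ₗ[F] (Fin nB → F)) (hθ : Function.Injective θ)
    (A : ∀ i, Submodule (K i) (Fin nA → K i))
    (CGC : Set (Fin nA × Fin nB → F))
    (hCGC : CGC = {c | ∃ a : ∀ i, Fin nA → K i,
      (∀ i, a i ∈ A i) ∧ ∀ p : Fin nA × Fin nB, c p = θ (fun i => a i p.1) p.2})
    (d δ : Fin ℓ → ℕ)
    (hd : ∀ (j : Fin ℓ) (a : ∀ i, K i), (∀ i, i < j → a i = 0) → θ a ≠ 0 →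
      d j ≤ wt (θ a))
    (hδ : ∀ (j : Fin ℓ), ∀ a ∈ A j, a ≠ 0 → δ j ≤ wt a) :
    ∀ c ∈ CGC, c ≠ 0 →
      Finset.univ.inf' ⟨⟨0, hℓ⟩, Finset.mem_univ _⟩ (fun j => δ j * d j) ≤
        wt c := by
  classical
  intro c hc hc0
  rw [hCGC] at hc
  obtain ⟨a, hA, hca⟩ := hc
  -- the set of indices with a i ≠ 0 is nonempty
  have hθ0 : ∀ x : ∀ i, K i, θ x ≠ 0 → x ≠ 0 := by
    intro x hx h0; exact hx (h0 ▸ map_zero θ)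
  have hθ0' : ∀ x : ∀ i, K i, x ≠ 0 → θ x ≠ 0 := by
    intro x hx h0
    exact hx (hθ (h0.trans (map_zero θ).symm))
  have hex : ∃ i, a i ≠ 0 := by
    by_contra h
    push_neg at h
    apply hc0
    funext p
    rw [hca p]
    have : (fun i => a i p.1) = 0 := by
      funext i; simp [h i]
    rw [this, map_zero]; rfl
  -- take minimal such j
  let S : Finset (Fin ℓ) := Finset.univ.filter (fun i => a i ≠ 0)
  have hS : S.Nonempty := by
    obtain ⟨i, hi⟩ := hex
    exact ⟨i, by simp [S, hi]⟩
  let j := S.min' hS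
  have hj : a j ≠ 0 := by
    have := S.min'_mem hS
    simpa [S] using this
  have hmin : ∀ i, i < j → a i = 0 := by
    intro i hi
    by_contra h
    exact absurd (S.min'_le i (by simp [S, h])) (not_le.mpr hi)
  -- column weights
  have hcol : ∀ m : Fin nA, a j m ≠ 0 →
      d j ≤ (Finset.univ.filter (fun q : Fin nB => c (m, q) ≠ 0)).card := by
    intro m hm
    have hx : (fun i => a i m) ≠ 0 := by
      intro h0
      exact hm (congrFun h0 j)
    have hne : θ (fun i => a i m) ≠ 0 := hθ0' _ hx
    have := hd j (fun i => a i m) (fun i hi => by show a i m = 0; rw [hmin i hi]; rfl) hne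
    rw [wt_eq_card] at this
    refine this.trans (le_of_eq ?_)
    congr 1
    apply Finset.filter_congr
    intro q _
    simp [hca (m, q)]
  -- wt c decomposes as sum of column weights
  have hsum : wt c = ∑ m : Fin nA,
      (Finset.univ.filter (fun q : Fin nB => c (m, q) ≠ 0)).card := by
    rw [wt_eq_card]
    rw [Finset.card_eq_sum_card_fiberwise (f := Prod.fst)
      (t := Finset.univ) (fun p _ => Finset.mem_univ _)]
    refine Finset.sum_congr rfl (fun m _ => ?_)
    apply Finset.card_bij (fun p _ => p.2)
    · intro p hp
      simp only [Finset.mem_filter, Finset.mem_univ, true_and] at hp ⊢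
      obtain ⟨h1, h2⟩ := hp
      rw [← h2] at *
      simpa using h1
    · intro p hp p' hp' h
      simp only [Finset.mem_filter] at hp hp'
      exact Prod.ext (hp.2.trans hp'.2.symm) h
    · intro q hq
      simp only [Finset.mem_filter, Finset.mem_univ, true_and] at hq
      exact ⟨(m, q), by simpa using hq, rfl⟩
  -- lower bound
  let T : Finset (Fin nA) := Finset.univ.filter (fun m => a j m ≠ 0)
  have hT : δ j ≤ T.card := by
    have := hδ j (a j) (hA j) hj
    rw [wt_eq_card] at this
    exact this
  calc Finset.univ.inf' ⟨⟨0, hℓ⟩, Finset.mem_univ _⟩ (fun j => δ j * d j)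
      ≤ δ j * d j := Finset.inf'_le _ (Finset.mem_univ j)
    _ ≤ T.card * d j := Nat.mul_le_mul_right _ hT
    _ = ∑ _m ∈ T, d j := by rw [Finset.sum_const, smul_eq_mul]
    _ ≤ ∑ m ∈ T, (Finset.univ.filter (fun q : Fin nB => c (m, q) ≠ 0)).card := by
        refine Finset.sum_le_sum (fun m hm => ?_)
        exact hcol m (by simpa [T] using hm)
    _ ≤ ∑ m : Fin nA, (Finset.univ.filter (fun q : Fin nB => c (m, q) ≠ 0)).card :=
        Finset.sum_le_sum_of_subset (Finset.subset_univ T)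
    _ = wt c := hsum.symm
end
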